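/- arXiv:0910.1866 — 2 statements merged into one kernel-verified Lean document; each statement's English description precedes it below -/
import Mathlib

section
/- (Error expansion under perturbation.) Let (w₁,…,w_p) and (δ₁,…,δ_p) be tuples in ℂ[[X]] with w_p = δ_p = 0 such that, for each 1 ≤ j < p: w_j ≠ 0 with leading term m_j and constant term σ_j, where either σ_j = 1 and m_j = 1, or σ_j = 0 and ord(w_j) ≥ μ; and ord(δ_j) > ord(w_j) (so that w_j and w_j + δ_j have the same leading term m_j). Then for each 1 ≤ j < p with δ_j ≠ 0, one has ord( E_j(w+δ) − E_j(w) − X^{2μ}·(δ_{j+1} − δ₁) + m_j*·δ_j ) > ord(m_j*) + ord(δ_j). -/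
/-- `f` has leading term (leading monomial) `β·X^q`: the coefficient of `X^q` is `β ≠ 0`
and all lower coefficients vanish. -/
def HasLeadingTerm (f : PowerSeries ℂ) (β : ℂ) (q : ℕ) : Prop :=
  β ≠ 0 ∧ PowerSeries.coeff (R := ℂ) q f = β ∧ ∀ n < q, PowerSeries.coeff (R := ℂ) n f = 0

/-- `(u 1, …, u p)` is a solution of the escape-region equations of period `p`
(where `X` plays the role of `𝔱^{1/μ}`, i.e. of `ξ^{1/μ}` with `ξ = 1/(3a)`):
`u p = 0` and `X^{2μ}(u_{j+1} − u₁) = u_j²(u_j − 1)` for `1 ≤ j < p`. -/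
def IsEscapeSolution (p μ : ℕ) (u : ℕ → PowerSeries ℂ) : Prop :=
  u p = 0 ∧ ∀ j, 1 ≤ j → j < p →
    (PowerSeries.X : PowerSeries ℂ) ^ (2 * μ) * (u (j + 1) - u 1)
      = (u j) ^ 2 * (u j - 1)

/-- The error `E_j(w) = X^{2μ}(w_{j+1} − w₁) − w_j²(w_j − 1)`. -/
noncomputable def Err (μ : ℕ) (w : ℕ → PowerSeries ℂ) (j : ℕ) : PowerSeries ℂ :=
  (PowerSeries.X : PowerSeries ℂ) ^ (2 * μ) * (w (j + 1) - w 1) - (w j) ^ 2 * (w j - 1)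

/-!
Expanding `z ↦ z²(z − 1)` around `w_j` gives
`E_j(w+δ) − E_j(w) − X^{2μ}(δ_{j+1} − δ₁) = −(3w_j² − 2w_j)δ_j − (3w_j − 1)δ_j² − δ_j³`.
The linear coefficient `3w_j² − 2w_j` agrees with `m_j*` modulo `X^{q_j+1}`: for `σ_j = 1` it is
`1 + (3w_j + 1)(w_j − 1)` with `X ∣ w_j − 1`, and for `σ_j = 0` the term `3w_j²` has order
`2q_j > q_j`, leaving `−2m_j`. The quadratic and cubic terms have order at least `2d_j`, which
exceeds `q_j + d_j` because `d_j > q_j`.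
-/

open PowerSeries

namespace HasLeadingTerm

variable {f : PowerSeries ℂ} {β : ℂ} {q : ℕ}

theorem X_pow_dvd (h : HasLeadingTerm f β q) : (X : PowerSeries ℂ) ^ q ∣ f :=
  X_pow_dvd_iff.mpr h.2.2

theorem X_pow_succ_dvd_sub_monomial (h : HasLeadingTerm f β q) :
    (X : PowerSeries ℂ) ^ (q + 1) ∣ f - monomial q β := by
  refine X_pow_dvd_iff.mpr fun n hn => ?_
  rcases (Nat.lt_succ_iff.mp hn).lt_or_eq with hlt | rfl
  · simp [coeff_monomial, hlt.ne, h.2.2 n hlt]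
  · simp [h.2.1]

theorem X_dvd_one_sub_linearization (h : HasLeadingTerm f 1 0) :
    (X : PowerSeries ℂ) ∣ 1 - (3 * f ^ 2 - 2 * f) := by
  have hX : (X : PowerSeries ℂ) ∣ f - 1 := by
    simpa using h.X_pow_succ_dvd_sub_monomial
  have hfactor : 1 - (3 * f ^ 2 - 2 * f) = -((3 * f + 1) * (f - 1)) := by ring
  exact hfactor ▸ (hX.mul_left _).neg_right

theorem X_pow_succ_dvd_monomial_sub_linearization (h : HasLeadingTerm f β q) (hq : 1 ≤ q) :
    (X : PowerSeries ℂ) ^ (q + 1) ∣ monomial q (-2 * β) - (3 * f ^ 2 - 2 * f) := by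
  have hsq : (X : PowerSeries ℂ) ^ (q + 1) ∣ f ^ 2 :=
    (pow_dvd_pow X (by omega : q + 1 ≤ q * 2)).trans
      (pow_mul (X : PowerSeries ℂ) q 2 ▸ pow_dvd_pow_of_dvd h.X_pow_dvd 2)
  have hsplit : monomial q (-2 * β) - (3 * f ^ 2 - 2 * f)
      = 2 * (f - monomial q β) - 3 * f ^ 2 := by
    have hC : monomial q (-2 * β) = -2 * monomial q β := by
      rw [show (-2 : PowerSeries ℂ) = C (-2) by rw [map_neg, map_ofNat],
        ← monomial_zero_eq_C_apply, monomial_mul_monomial, zero_add]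
    rw [hC]
    ring
  rw [hsplit]
  exact dvd_sub (h.X_pow_succ_dvd_sub_monomial.mul_left 2) (hsq.mul_left 3)

end HasLeadingTerm

theorem Err_add (μ : ℕ) (w δ : ℕ → PowerSeries ℂ) (j : ℕ) :
    Err μ (fun k => w k + δ k) j
      = Err μ w j + X ^ (2 * μ) * (δ (j + 1) - δ 1) - (3 * w j ^ 2 - 2 * w j) * δ j
        - (3 * w j - 1) * δ j ^ 2 - δ j ^ 3 := by
  simp only [Err]
  ring

theorem pow_dvd_mul_sub_mul_sq_sub_pow_three {R : Type*} [CommRing R] {x a b δ : R} {q d : ℕ}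
    (ha : x ^ (q + 1) ∣ a) (hδ : x ^ d ∣ δ) (hqd : q < d) :
    x ^ (q + d + 1) ∣ a * δ - b * δ ^ 2 - δ ^ 3 := by
  have hlin : x ^ (q + d + 1) ∣ a * δ := by
    rw [show q + d + 1 = (q + 1) + d by omega, pow_add]
    exact mul_dvd_mul ha hδ
  have hpow : ∀ k, 2 ≤ k → x ^ (q + d + 1) ∣ δ ^ k := fun k hk =>
    (pow_dvd_pow x (by nlinarith : q + d + 1 ≤ d * k)).trans
      (pow_mul x d k ▸ pow_dvd_pow_of_dvd hδ k)
  exact dvd_sub (dvd_sub hlin ((hpow 2 le_rfl).mul_left b)) (hpow 3 (by norm_num))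

theorem error_expansion_general (p μ : ℕ) (hμ : 1 ≤ μ)
    (w δ : ℕ → PowerSeries ℂ)
    (β : ℕ → ℂ) (q : ℕ → ℕ)
    (hwl : ∀ j, 1 ≤ j → j < p → HasLeadingTerm (w j) (β j) (q j))
    (hcases : ∀ j, 1 ≤ j → j < p →
      (PowerSeries.constantCoeff (R := ℂ) (w j) = 1 ∧ q j = 0 ∧ β j = 1) ∨
      (PowerSeries.constantCoeff (R := ℂ) (w j) = 0 ∧ μ ≤ q j))
    (hδsmall : ∀ j, 1 ≤ j → j < p → ∀ n ≤ q j, PowerSeries.coeff (R := ℂ) n (δ j) = 0) :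
    ∀ j, 1 ≤ j → j < p → δ j ≠ 0 →
      ∀ d : ℕ, (∀ n < d, PowerSeries.coeff (R := ℂ) n (δ j) = 0) →
        PowerSeries.coeff (R := ℂ) d (δ j) ≠ 0 →
        ∀ m ≤ q j + d,
          PowerSeries.coeff (R := ℂ) m
            (Err μ (fun k => w k + δ k) j - Err μ w j
              - (PowerSeries.X : PowerSeries ℂ) ^ (2 * μ) * (δ (j + 1) - δ 1)
              + (PowerSeries.monomial (R := ℂ) (q j)
                  ((3 * PowerSeries.constantCoeff (R := ℂ) (w j) - 2) * β j)) * δ j) = 0 := by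
  intro j hj1 hjp _ d hdlow hdne m hm
  have hw := hwl j hj1 hjp
  have hqd : q j < d := by
    by_contra! hdq
    exact hdne (hδsmall j hj1 hjp d hdq)
  have hlin : X ^ (q j + 1) ∣ monomial (q j) ((3 * constantCoeff (w j) - 2) * β j)
      - (3 * w j ^ 2 - 2 * w j) := by
    rcases hcases j hj1 hjp with ⟨hσ, hq, hβ⟩ | ⟨hσ, hμq⟩
    · rw [hq, hβ] at hw
      rw [hσ, hq, hβ, show ((3 * 1 - 2) * 1 : ℂ) = 1 by norm_num, monomial_zero_eq_C_apply,
        map_one]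
      simpa using hw.X_dvd_one_sub_linearization
    · rw [hσ, show (3 * 0 - 2 : ℂ) = -2 by norm_num]
      exact hw.X_pow_succ_dvd_monomial_sub_linearization (hμ.trans hμq)
  have hrem := pow_dvd_mul_sub_mul_sq_sub_pow_three (b := 3 * w j - 1) hlin
    (X_pow_dvd_iff.mpr hdlow) hqd
  refine X_pow_dvd_iff.mp ?_ m (Nat.lt_succ_of_le hm)
  convert hrem using 1
  rw [Err_add]
  ring

/-- **Error expansion under perturbation.** With `w_p = δ_p = 0`, each `w_j ≠ 0` having
leading term `m_j = β_j·X^{q_j}` and constant term `σ_j` (either `σ_j = 1` with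
`m_j = 1`, or `σ_j = 0` with `ord(w_j) ≥ μ`), and `ord(δ_j) > ord(w_j)`, one has for
each `j` with `δ_j ≠ 0` (writing `d_j = ord(δ_j)` and
`m_j* = (3σ_j − 2)·m_j`):
`ord(E_j(w+δ) − E_j(w) − X^{2μ}(δ_{j+1} − δ₁) + m_j*·δ_j) > ord(m_j*) + ord(δ_j)`. -/
theorem error_expansion (p μ : ℕ) (hp : 1 ≤ p) (hμ : 1 ≤ μ)
    (w δ : ℕ → PowerSeries ℂ) (hwp : w p = 0) (hδp : δ p = 0)
    (β : ℕ → ℂ) (q : ℕ → ℕ)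
    (hwl : ∀ j, 1 ≤ j → j < p → HasLeadingTerm (w j) (β j) (q j))
    (hcases : ∀ j, 1 ≤ j → j < p →
      (PowerSeries.constantCoeff (R := ℂ) (w j) = 1 ∧ q j = 0 ∧ β j = 1) ∨
      (PowerSeries.constantCoeff (R := ℂ) (w j) = 0 ∧ μ ≤ q j))
    (hδsmall : ∀ j, 1 ≤ j → j < p → ∀ n ≤ q j, PowerSeries.coeff (R := ℂ) n (δ j) = 0) :
    ∀ j, 1 ≤ j → j < p → δ j ≠ 0 →
      ∀ d : ℕ, (∀ n < d, PowerSeries.coeff (R := ℂ) n (δ j) = 0) →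
        PowerSeries.coeff (R := ℂ) d (δ j) ≠ 0 →
        ∀ m ≤ q j + d,
          PowerSeries.coeff (R := ℂ) m
            (Err μ (fun k => w k + δ k) j - Err μ w j
              - (PowerSeries.X : PowerSeries ℂ) ^ (2 * μ) * (δ (j + 1) - δ 1)
              + (PowerSeries.monomial (R := ℂ) (q j)
                  ((3 * PowerSeries.constantCoeff (R := ℂ) (w j) - 2) * β j)) * δ j) = 0 :=
  error_expansion_general p μ hμ w δ β q hwl hcases hδsmall
end

section
/- (Trivial kneading sequence gives a quadratic critical orbit.) Let (u₁,…,u_p) be a solution of the escape-region equations whose kneading sequence is trivial, i.e. σ_j = 0 (u_j has zero constant term) for all 1 ≤ j < p. Then X^{2μ} divides every u_j, and the complex numbers c_j := −(coefficient of X^{2μ} in u_j), for 1 ≤ j ≤ p (so that c_p = 0), satisfy c_{j+1} = c_j² + c₁ for all 1 ≤ j < p. Thus 0 ↦ c₁ ↦ c₂ ↦ ⋯ ↦ c_{p−1} ↦ 0 is a period-p orbit of the quadratic map z ↦ z² + c₁ containing its critical point 0. -/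
/-!
When every `u_j` has zero constant term, each `u_j - 1` is a unit, so if `X^k` divides all
`u_j` then the equation makes `X^{2μ+k}` divide `u_j²`, hence `X^{k+1}` divide `u_j` while
`k < 2μ`; bootstrapping gives `X^{2μ} ∣ u_j`. Writing `u_j = X^{2μ} v_j` and cancelling
`X^{4μ}`, the equation becomes `v_{j+1} - v₁ = v_j² (X^{2μ} v_j - 1)`, whose constant term
is the quadratic recursion for `c_j = -v_j(0)`.
-/

open PowerSeries

namespace PowerSeries

variable {R : Type*}

theorem X_pow_dvd_iff_le_order [Semiring R] {n : ℕ} {φ : R⟦X⟧} :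
    (X : R⟦X⟧) ^ n ∣ φ ↔ (n : ℕ∞) ≤ φ.order := by
  rw [order_eq_emultiplicity_X, pow_dvd_iff_le_emultiplicity]

theorem X_pow_succ_dvd_of_X_pow_dvd_sq [Semiring R] [NoZeroDivisors R] [Nontrivial R]
    {f : R⟦X⟧} {k : ℕ} (h : (X : R⟦X⟧) ^ (2 * k + 1) ∣ f ^ 2) : (X : R⟦X⟧) ^ (k + 1) ∣ f := by
  rw [X_pow_dvd_iff_le_order, order_pow] at *
  cases hf : f.order with
  | top => simp
  | coe n =>
    rw [hf, nsmul_eq_mul] at h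
    norm_cast at h ⊢
    omega

section SqMulSubOne

variable [CommRing R] {a b : R⟦X⟧} {n : ℕ}

theorem X_pow_succ_dvd_of_X_pow_mul_eq_sq_mul_sub_one [NoZeroDivisors R] [Nontrivial R]
    (ha : constantCoeff a = 0) (heq : X ^ n * b = a ^ 2 * (a - 1)) {k : ℕ}
    (hb : (X : R⟦X⟧) ^ k ∣ b) (hk : k < n) : (X : R⟦X⟧) ^ (k + 1) ∣ a := by
  have hunit : IsUnit (a - 1) := isUnit_iff_constantCoeff.mpr (by simp [ha])
  have hprod : (X : R⟦X⟧) ^ (n + k) ∣ a ^ 2 * (a - 1) := by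
    rw [← heq, pow_add]
    exact mul_dvd_mul_left _ hb
  have hsq : (X : R⟦X⟧) ^ (2 * k + 1) ∣ a ^ 2 :=
    (pow_dvd_pow X (by omega)).trans (hunit.dvd_mul_right.mp hprod)
  exact X_pow_succ_dvd_of_X_pow_dvd_sq hsq

theorem coeff_eq_neg_sq_of_X_pow_mul_eq_sq_mul_sub_one (hn : n ≠ 0)
    (ha : (X : R⟦X⟧) ^ n ∣ a) (hb : (X : R⟦X⟧) ^ n ∣ b) (heq : X ^ n * b = a ^ 2 * (a - 1)) :
    coeff n b = -coeff n a ^ 2 := by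
  obtain ⟨a, rfl⟩ := ha
  obtain ⟨b, rfl⟩ := hb
  have hb : b = a ^ 2 * (X ^ n * a - 1) := by
    refine X_pow_mul_cancel (k := n) (X_pow_mul_cancel (k := n) ?_)
    rw [heq]
    ring
  simp [coeff_X_pow_mul', hb, hn]

end SqMulSubOne

end PowerSeries

namespace IsEscapeSolution

variable {p μ : ℕ} {u : ℕ → PowerSeries ℂ}

theorem X_pow_dvd (hu : IsEscapeSolution p μ u)
    (hσ : ∀ j, 1 ≤ j → j < p → constantCoeff (u j) = 0) {k : ℕ} (hk : k ≤ 2 * μ) :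
    ∀ j, 1 ≤ j → j ≤ p → (X : PowerSeries ℂ) ^ k ∣ u j := by
  induction k with
  | zero => simp
  | succ k ih =>
    intro j hj hjp
    rcases hjp.lt_or_eq with hjp | rfl
    · have hdiff : (X : PowerSeries ℂ) ^ k ∣ u (j + 1) - u 1 :=
        dvd_sub (ih (by omega) (j + 1) (by omega) hjp) (ih (by omega) 1 le_rfl (by omega))
      exact X_pow_succ_dvd_of_X_pow_mul_eq_sq_mul_sub_one (hσ j hj hjp) (hu.2 j hj hjp) hdiff
        (by omega)
    · rw [hu.1]
      exact dvd_zero _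

end IsEscapeSolution

theorem trivial_kneading_quadratic_general (p μ : ℕ) (hμ : 1 ≤ μ)
    (u : ℕ → PowerSeries ℂ) (hu : IsEscapeSolution p μ u)
    (hσ : ∀ j, 1 ≤ j → j < p → PowerSeries.constantCoeff (R := ℂ) (u j) = 0)
    (c : ℕ → ℂ) (hc : ∀ j, c j = -(PowerSeries.coeff (R := ℂ) (2 * μ) (u j))) :
    (∀ j, 1 ≤ j → j ≤ p → (PowerSeries.X : PowerSeries ℂ) ^ (2 * μ) ∣ u j) ∧
    c p = 0 ∧
    (∀ j, 1 ≤ j → j < p → c (j + 1) = (c j) ^ 2 + c 1) := by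
  have hdvd := hu.X_pow_dvd hσ le_rfl
  refine ⟨hdvd, by simp [hc, hu.1], fun j hj hjp => ?_⟩
  have hcoeff := coeff_eq_neg_sq_of_X_pow_mul_eq_sq_mul_sub_one (by omega) (hdvd j hj hjp.le)
    (dvd_sub (hdvd (j + 1) (by omega) hjp) (hdvd 1 le_rfl (by omega))) (hu.2 j hj hjp)
  rw [map_sub] at hcoeff
  rw [hc, hc, hc]
  linear_combination -hcoeff

/-- **Trivial kneading sequence gives a quadratic critical orbit.** If every `u_j`
(`1 ≤ j < p`) has vanishing constant term, then `X^{2μ}` divides every `u_j`, and the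
numbers `c_j := −(coefficient of X^{2μ} in u_j)` (so `c_p = 0`) satisfy
`c_{j+1} = c_j² + c₁`; thus `0 ↦ c₁ ↦ ⋯ ↦ c_{p−1} ↦ 0` is a period-`p` critical orbit
of `z ↦ z² + c₁`. -/
theorem trivial_kneading_quadratic (p μ : ℕ) (hp : 1 ≤ p) (hμ : 1 ≤ μ)
    (u : ℕ → PowerSeries ℂ) (hu : IsEscapeSolution p μ u)
    (hσ : ∀ j, 1 ≤ j → j < p → PowerSeries.constantCoeff (R := ℂ) (u j) = 0)
    (c : ℕ → ℂ) (hc : ∀ j, c j = -(PowerSeries.coeff (R := ℂ) (2 * μ) (u j))) :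
    (∀ j, 1 ≤ j → j ≤ p → (PowerSeries.X : PowerSeries ℂ) ^ (2 * μ) ∣ u j) ∧
    c p = 0 ∧
    (∀ j, 1 ≤ j → j < p → c (j + 1) = (c j) ^ 2 + c 1) :=
  trivial_kneading_quadratic_general p μ hμ u hu hσ c hc
end
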